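/- arXiv:2110.07556 — 5 statements merged into one kernel-verified Lean document; each statement's English description precedes it below -/
import Mathlib

section
/- Let M(n,d) be the 2×2 rational matrix (1/(d² + 2dn − n²)) · [[−n², dn], [dn, −d²]] for a reduced fraction 0 < n/d < 1. Then the lattice L(n,d) = { v ∈ ℤ² : M(n,d)·v ∈ ℤ² } equals the integer span of the vectors v₁ = (d, n) and v₂ = (n−d, n+d). -/
/-- The hyperbola matrix `M(n,d)`. -/
noncomputable def Mnd (n d : ℤ) : Matrix (Fin 2) (Fin 2) ℚ :=
  (1 / ((d : ℚ)^2 + 2*(d : ℚ)*(n : ℚ) - (n : ℚ)^2)) •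
    !![-(n : ℚ)^2, (d : ℚ)*(n : ℚ); (d : ℚ)*(n : ℚ), -(d : ℚ)^2]

/-- The lattice of `M(n,d)` is generated by `(d,n)` and `(n-d, n+d)`. -/
theorem stmt_2 (n d : ℤ) (h0 : 0 < n) (h1 : n < d) (hg : IsCoprime n d) :
    {v : Fin 2 → ℤ | ∀ i, ∃ m : ℤ, (Mnd n d).mulVec (fun j => ((v j : ℚ))) i = (m : ℚ)} =
    {v : Fin 2 → ℤ | ∃ a b : ℤ, v = a • ![d, n] + b • ![n - d, n + d]} := by
  have hT0 : (d^2 + 2*d*n - n^2 : ℤ) ≠ 0 := by nlinarith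
  have hTQ : ((d^2 + 2*d*n - n^2 : ℤ) : ℚ) ≠ 0 := Int.cast_ne_zero.mpr hT0
  have hTQ' : ((d:ℚ)^2 + 2*(d:ℚ)*(n:ℚ) - (n:ℚ)^2) ≠ 0 := by push_cast at hTQ; exact hTQ
  have hTd : IsCoprime (d^2 + 2*d*n - n^2) d := by
    have h := ((hg.symm.pow_right (n := 2)).neg_right).add_mul_left_right (d + 2*n)
    have e : -(n^2) + d*(d+2*n) = d^2 + 2*d*n - n^2 := by ring
    rw [e] at h; exact h.symm
  have hm0 : ∀ v : Fin 2 → ℤ, (Mnd n d).mulVec (fun j => ((v j : ℚ))) 0 =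
      ((-n^2*v 0 + d*n*v 1 : ℤ) : ℚ) / ((d^2+2*d*n-n^2 : ℤ) : ℚ) := by
    intro v
    simp [Mnd, Matrix.mulVec, dotProduct, Fin.sum_univ_two]
    ring
  have hm1 : ∀ v : Fin 2 → ℤ, (Mnd n d).mulVec (fun j => ((v j : ℚ))) 1 =
      ((d*n*v 0 - d^2*v 1 : ℤ) : ℚ) / ((d^2+2*d*n-n^2 : ℤ) : ℚ) := by
    intro v
    simp [Mnd, Matrix.mulVec, dotProduct, Fin.sum_univ_two]
    ring
  have hdiv : ∀ x : ℤ, (∃ m : ℤ, ((x:ℚ)) / ((d^2+2*d*n-n^2 : ℤ):ℚ) = (m:ℚ)) ↔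
      (d^2+2*d*n-n^2) ∣ x := by
    intro x
    constructor
    · rintro ⟨m, hm⟩
      rw [div_eq_iff hTQ] at hm
      have : x = m * (d^2+2*d*n-n^2) := by exact_mod_cast hm
      exact ⟨m, by rw [this]; ring⟩
    · rintro ⟨m, hm⟩
      refine ⟨m, ?_⟩
      rw [hm]; push_cast
      rw [mul_comm, mul_div_assoc, div_self hTQ', mul_one]
  ext v
  simp only [Set.mem_setOf_eq]
  rw [Fin.forall_fin_two, hm0 v, hm1 v, hdiv, hdiv]
  constructor
  · rintro ⟨⟨c0, hc0⟩, ⟨c1, hc1⟩⟩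
    have hb : (d^2+2*d*n-n^2) ∣ (n*v 0 - d*v 1) := by
      refine hTd.dvd_of_dvd_mul_right ?_
      exact ⟨c1, by linear_combination hc1⟩
    obtain ⟨c, hc⟩ := hb
    have ha : (d^2+2*d*n-n^2) ∣ ((n+d)*v 0 - (n-d)*v 1) := by
      refine hTd.dvd_of_dvd_mul_right ?_
      exact ⟨v 0 + (n-d)*c, by linear_combination (n-d)*hc⟩
    obtain ⟨a, hA⟩ := ha
    have e0 : (d^2+2*d*n-n^2) * (v 0) = (d^2+2*d*n-n^2) * (a*d + (-c)*(n-d)) := by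
      linear_combination d*hA - (n-d)*hc
    have e1 : (d^2+2*d*n-n^2) * (v 1) = (d^2+2*d*n-n^2) * (a*n + (-c)*(n+d)) := by
      linear_combination n*hA - (n+d)*hc
    refine ⟨a, -c, ?_⟩
    funext i
    fin_cases i
    · simpa using mul_left_cancel₀ hT0 e0
    · simpa using mul_left_cancel₀ hT0 e1
  · rintro ⟨a, b, rfl⟩
    refine ⟨⟨b*n, ?_⟩, ⟨-(b*d), ?_⟩⟩ <;> simp <;> ring
end

section
/- The rotation R commutes with the child operator on Farey pairs: if (p,q) is an odd-even Farey pair and C(p,q) = (p', q') is its child pair, then R applied componentwise with swap, R(p,q) := (R(q), R(p)), satisfies R(C(p,q)) = C(R(p,q)). -/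
/-- The rotation on reduced fractions, written on pairs (numerator, denominator). -/
def rotF (p : ℕ × ℕ) : ℕ × ℕ :=
  if Odd (p.1 + p.2) then (p.2 - p.1, p.2 + p.1) else ((p.2 - p.1) / 2, (p.2 + p.1) / 2)

/-- The child operator on an odd-even Farey pair:
`C(p,q) = ((eₙ+oₙ)/(e_d+o_d), (2oₙ+eₙ)/(2o_d+e_d))`. -/
def childF (p q : ℕ × ℕ) : (ℕ × ℕ) × (ℕ × ℕ) :=
  ((q.1 + p.1, q.2 + p.2), (2*p.1 + q.1, 2*p.2 + q.2))

/-- The rotation on pairs of fractions, applied componentwise with swap. -/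
def rotPair (pq : (ℕ × ℕ) × (ℕ × ℕ)) : (ℕ × ℕ) × (ℕ × ℕ) :=
  (rotF pq.2, rotF pq.1)

/-- The rotation commutes with the child operator on odd-even Farey pairs. -/
theorem stmt_8 (oN oD eN eD : ℕ) (hod : 0 < oD) (hed : 0 < eD)
    (hon : oN ≤ oD) (hen : eN ≤ eD)
    (hco : Nat.gcd oN oD = 1) (hce : Nat.gcd eN eD = 1)
    (hpo : Odd (oN + oD)) (hpe : Even (eN + eD))
    (hF : (oD : ℤ) * eN - oN * eD = 1 ∨ (oN : ℤ) * eD - oD * eN = 1) :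
    rotPair (childF (oN, oD) (eN, eD)) = childF (rotF (eN, eD)) (rotF (oN, oD)) := by
  rw [Nat.odd_iff] at hpo
  rw [Nat.even_iff] at hpe
  simp only [rotPair, childF, rotF, Nat.odd_iff]
  split_ifs <;> simp [Prod.ext_iff] <;> omega
end

section
/- Define q_k(n) = ((k−1)/(2k))(n² − s²) + s(s−1)/2 where s ∈ {0,…,k−1} with s ≡ n (mod k). Then q_k(n) is an integer for all integers n, and the function r₂(x₁,x₂) = q_k(x₁+x₂) satisfies, for the F⁽ᵏ⁾-lattice Laplacian, Δr₂(x) = 1 if x₁+x₂ ≢ 0 (mod k) and Δr₂(x) = 0 otherwise. -/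
/-- `q_k(n) = ((k−1)/(2k))(n²−s²) + s(s−1)/2` with `s = n mod k`, as a rational number. -/
def qkQ (k n : ℤ) : ℚ :=
  ((k : ℚ) - 1) / (2 * (k : ℚ)) * ((n : ℚ)^2 - ((n % k : ℤ) : ℚ)^2) +
    ((n % k : ℤ) : ℚ) * (((n % k : ℤ) : ℚ) - 1) / 2

/-- The F⁽ᵏ⁾-lattice Laplacian for rational-valued functions. -/
def fklapQ (k : ℕ) (g : ℤ × ℤ → ℚ) (x : ℤ × ℤ) : ℚ :=
  if (k : ℤ) ∣ (x.1 + x.2) then g (x.1 + 1, x.2) + g (x.1 - 1, x.2) - 2 * g x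
  else g (x.1, x.2 + 1) + g (x.1, x.2 - 1) - 2 * g x

lemma qk_int (k : ℤ) (hk : 2 ≤ k) (n : ℤ) : ∃ m : ℤ, qkQ k n = (m : ℚ) := by
  set q := n / k with hq
  set s := n % k with hs
  have hn : n = k * q + s := by rw [hq, hs]; exact (Int.mul_ediv_add_emod n k).symm
  obtain ⟨a, ha⟩ : Even ((k - 1) * k) := by
    have := Int.even_mul_succ_self (k - 1)
    simpa using this
  obtain ⟨b, hb⟩ : Even (s * (s - 1)) := by
    have := Int.even_mul_succ_self (s - 1)
    have h : (s - 1) * (s - 1 + 1) = s * (s - 1) := by ring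
    rwa [h] at this
  refine ⟨a * q ^ 2 + (k - 1) * q * s + b, ?_⟩
  have hk0 : (k : ℚ) ≠ 0 := by
    have : (0:ℤ) < k := by omega
    exact_mod_cast this.ne'
  have hnQ : (n : ℚ) = k * q + s := by exact_mod_cast hn
  have haQ : ((k : ℚ) - 1) * k = a + a := by exact_mod_cast ha
  have hbQ : (s : ℚ) * (s - 1) = b + b := by exact_mod_cast hb
  rw [qkQ, ← hs, hnQ]
  push_cast
  field_simp
  linear_combination (k:ℚ) * (q:ℚ)^2 * haQ + (k:ℚ) * hbQ

lemma key (k : ℤ) (hk : 2 ≤ k) (m : ℤ) :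
    qkQ k (m+1) + qkQ k (m-1) - 2 * qkQ k m = if k ∣ m then 0 else 1 := by
  have hkpos : (0:ℤ) < k := by omega
  have hk0 : (k : ℚ) ≠ 0 := by exact_mod_cast hkpos.ne'
  set s := m % k with hs
  have hs0 : 0 ≤ s := Int.emod_nonneg m hkpos.ne'
  have hsk : s < k := Int.emod_lt_of_pos m hkpos
  set p := m / k with hp
  have hm : m = p * k + s := by
    have h := Int.mul_ediv_add_emod m k
    have h2 : k * p = p * k := mul_comm _ _
    rw [hp, hs]; linarith [h, h2]
  have h1 : (m + 1) % k = if s = k - 1 then 0 else s + 1 := by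
    have e : m + 1 = (s + 1) + p * k := by linarith
    rw [e, Int.add_mul_emod_self_right]
    split_ifs with h
    · simp [h]
    · exact Int.emod_eq_of_lt (by omega) (by omega)
  have h2 : (m - 1) % k = if s = 0 then k - 1 else s - 1 := by
    split_ifs with h
    · have e : m - 1 = (k - 1) + (p - 1) * k := by
        have hh : (p-1)*k = p*k - k := by ring
        linarith
      rw [e, Int.add_mul_emod_self_right]
      exact Int.emod_eq_of_lt (by omega) (by omega)
    · have e : m - 1 = (s - 1) + p * k := by linarith
      rw [e, Int.add_mul_emod_self_right]
      exact Int.emod_eq_of_lt (by omega) (by omega)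
  by_cases hd : k ∣ m
  · have hs00 : s = 0 := by rw [hs]; exact Int.emod_eq_zero_of_dvd hd
    rw [if_pos hd]
    have h1' : (m + 1) % k = 1 := by rw [h1, if_neg (by omega)]; omega
    have h2' : (m - 1) % k = k - 1 := by rw [h2, if_pos hs00]
    rw [qkQ, qkQ, qkQ, h1', h2', ← hs, hs00]
    push_cast
    field_simp
    ring
  · rw [if_neg hd]
    have hsne : s ≠ 0 := fun h => hd (Int.dvd_of_emod_eq_zero (hs ▸ h))
    by_cases hse : s = k - 1
    · have h1' : (m + 1) % k = 0 := by rw [h1, if_pos hse]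
      have h2' : (m - 1) % k = k - 2 := by rw [h2, if_neg hsne]; omega
      rw [qkQ, qkQ, qkQ, h1', h2', ← hs, hse]
      push_cast
      field_simp
      ring
    · have h1' : (m + 1) % k = s + 1 := by rw [h1, if_neg hse]
      have h2' : (m - 1) % k = s - 1 := by rw [h2, if_neg hsne]
      rw [qkQ, qkQ, qkQ, h1', h2', ← hs]
      push_cast
      field_simp
      ring

/-- `q_k` is integer-valued, and `r₂(x₁,x₂) = q_k(x₁+x₂)` has F⁽ᵏ⁾-Laplacian `1` when
`k ∤ x₁+x₂` and `0` otherwise. -/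
theorem stmt_14 (k : ℕ) (hk : 2 ≤ k) :
    (∀ n : ℤ, ∃ m : ℤ, qkQ (k : ℤ) n = (m : ℚ)) ∧
    ∀ x : ℤ × ℤ, fklapQ k (fun y => qkQ (k : ℤ) (y.1 + y.2)) x =
      if (k : ℤ) ∣ (x.1 + x.2) then 0 else 1 := by
  have hk' : (2:ℤ) ≤ (k:ℤ) := by exact_mod_cast hk
  refine ⟨fun n => qk_int k hk' n, fun x => ?_⟩
  have hkey := key (k:ℤ) hk' (x.1 + x.2)
  rw [fklapQ]
  split_ifs with h
  · have e1 : x.1 + 1 + x.2 = x.1 + x.2 + 1 := by ring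
    have e2 : x.1 - 1 + x.2 = x.1 + x.2 - 1 := by ring
    simp only [e1, e2]
    rw [if_pos h] at hkey
    linarith [hkey]
  · rw [if_neg h] at hkey
    simp only [show x.1 + (x.2 + 1) = x.1 + x.2 + 1 from by ring,
      show x.1 + (x.2 - 1) = x.1 + x.2 - 1 from by ring]
    linarith [hkey]
end

section
/- For 2 ≤ k ≤ 7 and all integers n ≥ 0, q_k(n) = ⌊((k−1)/(2k))·n²⌋, where q_k(n) = ((k−1)/(2k))(n²−s²) + s(s−1)/2 with s ≡ n (mod k), 0 ≤ s < k. Moreover, for every k ≥ 8 there exists n with q_k(n) ≠ ⌊((k−1)/(2k))·n²⌋. -/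
/-!
Write `n = kq + s` with `0 ≤ s < k`. Then `q_k(n)` is an integer and
`((k−1)/(2k))·n² = q_k(n) + s(k−s)/(2k)`, so the floor formula holds exactly when
`s(k−s) < 2k`. Since `4s(k−s) ≤ k²`, this is automatic for `k < 8`; for `k ≥ 8` it fails at
`n = s = 4`.
-/

lemma mul_sq_eq_qkQ_add (k n : ℤ) (hk : k ≠ 0) :
    ((k : ℚ) - 1) / (2 * k) * (n : ℚ) ^ 2 =
      qkQ k n + ((n % k : ℤ) : ℚ) * (k - (n % k : ℤ)) / (2 * k) := by
  rw [qkQ]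
  field_simp
  ring

lemma exists_qkQ_eq_intCast (k n : ℤ) (hk : k ≠ 0) : ∃ m : ℤ, qkQ k n = m := by
  set s := n % k
  set q := n / k
  have hn : (n : ℚ) = k * q + s := by exact_mod_cast (Int.mul_ediv_add_emod n k).symm
  -- `(k−1)(n²−s²)/k = (k−1)q(kq+2s)`, and `(k−1)k` and `s(s−1)` are even.
  obtain ⟨m, hm⟩ : Even ((k - 1) * q * (k * q + 2 * s) + s * (s - 1)) := by
    have hk2 : Even ((k - 1) * k) := by simpa using Int.even_mul_succ_self (k - 1)
    have hs2 : Even (s * (s - 1)) := by simpa [mul_comm] using Int.even_mul_succ_self (s - 1)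
    have hsplit : (k - 1) * q * (k * q + 2 * s) + s * (s - 1) =
        (k - 1) * k * q ^ 2 + (2 * ((k - 1) * q * s) + s * (s - 1)) := by ring
    rw [hsplit]
    exact (hk2.mul_right _).add ((even_two.mul_right _).add hs2)
  have hmQ : ((k : ℚ) - 1) * q * (k * q + 2 * s) + s * (s - 1) = m + m := by exact_mod_cast hm
  refine ⟨m, ?_⟩
  rw [qkQ, hn]
  field_simp
  linear_combination (k : ℚ) * hmQ

lemma qkQ_eq_floor_iff (k n : ℤ) (hk : 0 < k) :
    qkQ k n = ((⌊((k : ℚ) - 1) / (2 * (k : ℚ)) * (n : ℚ)^2⌋ : ℤ) : ℚ) ↔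
      n % k * (k - n % k) < 2 * k := by
  obtain ⟨m, hm⟩ := exists_qkQ_eq_intCast k n hk.ne'
  have hs0 : 0 ≤ n % k := Int.emod_nonneg n hk.ne'
  have hsk : n % k < k := Int.emod_lt_of_pos n hk
  have hkQ : (0 : ℚ) < 2 * k := by positivity
  have hfrac : (0 : ℚ) ≤ ((n % k : ℤ) : ℚ) * (k - (n % k : ℤ)) / (2 * k) := by
    have : ((n % k : ℤ) : ℚ) < k := by exact_mod_cast hsk
    have : (0 : ℚ) ≤ (n % k : ℤ) := by exact_mod_cast hs0
    positivity
  rw [mul_sq_eq_qkQ_add k n hk.ne', hm, Int.floor_intCast_add, Int.cast_inj, left_eq_add,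
    Int.floor_eq_zero_iff, Set.mem_Ico, div_lt_one hkQ]
  simp only [hfrac, true_and]
  exact_mod_cast Iff.rfl

/-- The closed floor formula `q_k(n) = ⌊((k−1)/(2k))·n²⌋` holds for `2 ≤ k ≤ 7` and all
`n ≥ 0`, and fails for every `k ≥ 8`. -/
theorem stmt_15 :
    (∀ k : ℤ, 2 ≤ k → k ≤ 7 → ∀ n : ℤ, 0 ≤ n →
      qkQ k n = ((⌊((k : ℚ) - 1) / (2 * (k : ℚ)) * (n : ℚ)^2⌋ : ℤ) : ℚ)) ∧
    (∀ k : ℤ, 8 ≤ k → ∃ n : ℤ, 0 ≤ n ∧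
      qkQ k n ≠ ((⌊((k : ℚ) - 1) / (2 * (k : ℚ)) * (n : ℚ)^2⌋ : ℤ) : ℚ)) := by
  constructor
  · intro k hk2 hk7 n _
    rw [qkQ_eq_floor_iff k n (by omega)]
    nlinarith [sq_nonneg (2 * (n % k) - k)]
  · intro k hk8
    refine ⟨4, by norm_num, ?_⟩
    rw [Ne, qkQ_eq_floor_iff k 4 (by omega), Int.emod_eq_of_lt (by norm_num) (by omega)]
    omega
end

section
/- Consider the word recursion on pairs in the free monoid on letters {p,q}: starting from (p₀,q₀)=(p,q) and repeatedly applying one of the maps sending (a,b) to (bba, ba) or to (abb, ab) (according to a parity rule). Then along the specific branch applying always the 'Type 3' rule one obtains the pair (q pᵏ q pᵏ⁺¹, q pᵏ⁺¹) with parents (p, q pᵏ) after k steps; along the always-'Type 2' branch one obtains (q^{2(k+1)} p, q^{2k+1} p) with parents (q^{2k} p, q). -/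
/-- The letter `p`, as a word over the alphabet `{p,q}` (with `p = false`, `q = true`). -/
def wp : List Bool := [false]

/-- The letter `q`, as a word over the alphabet `{p,q}`. -/
def wq : List Bool := [true]

/-- `k`-fold concatenation of a word with itself. -/
def wpow (w : List Bool) (k : ℕ) : List Bool := (List.replicate k w).flatten

/-- A quadruple of binary words `(p₁, q₁, p₂, q₂)`. -/
abbrev WQuad := List Bool × List Bool × List Bool × List Bool

/-- The Type 3 child: `(C(p₂,q₁), p₂, q₁)` with (even-parity rule) `C(a,b) = (b b a, b a)`. -/
def step3 : WQuad → WQuad := fun x => (x.2.1 ++ x.2.1 ++ x.2.2.1, x.2.1 ++ x.2.2.1, x.2.2.1, x.2.1)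

/-- The Type 2 child: `(C(p₁,q₂), p₁, q₂)` with (even-parity rule) `C(a,b) = (b b a, b a)`. -/
def step2 : WQuad → WQuad := fun x => (x.2.2.2 ++ x.2.2.2 ++ x.1, x.2.2.2 ++ x.1, x.1, x.2.2.2)

/-- The base quadruple `Q_{()} = (qqp, qp, p, q)`. -/
def baseQuad : WQuad := (wq ++ wq ++ wp, wq ++ wp, wp, wq)

lemma wpow_add (w : List Bool) (m n : ℕ) : wpow w (m+n) = wpow w m ++ wpow w n := by
  unfold wpow
  rw [List.replicate_add]; exact List.flatten_append

lemma wpow_one (w : List Bool) : wpow w 1 = w := by simp [wpow]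

lemma wpow_comm (w : List Bool) (n : ℕ) : w ++ wpow w n = wpow w n ++ w := by
  have h1 := wpow_add w 1 n
  have h2 := wpow_add w n 1
  rw [wpow_one] at h1 h2
  rw [← h1, ← h2, add_comm]

/-- Closed forms of the two degenerate branches of the binary word recursion:
`Q_{3^k} = (q pᵏ q pᵏ⁺¹, q pᵏ⁺¹, p, q pᵏ)` and
`Q_{2^k} = (q^{2(k+1)} p, q^{2k+1} p, q^{2k} p, q)`. -/
theorem stmt_16 (k : ℕ) :
    step3^[k] baseQuad =
      (wq ++ wpow wp k ++ wq ++ wpow wp (k+1), wq ++ wpow wp (k+1), wp, wq ++ wpow wp k) ∧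
    step2^[k] baseQuad =
      (wpow wq (2*(k+1)) ++ wp, wpow wq (2*k+1) ++ wp, wpow wq (2*k) ++ wp, wq) := by
  induction k with
  | zero => constructor <;> simp [wpow, baseQuad, wq, wp]
  | succ k ih =>
    obtain ⟨h3, h2⟩ := ih
    constructor
    · rw [Function.iterate_succ_apply', h3]
      simp only [step3, wpow_add, wpow_one]
      simp only [List.append_assoc, ← wpow_comm]
      try simp [List.append_assoc]
    · rw [Function.iterate_succ_apply', h2]
      simp only [step2]
      have e1 : 2*(k+1+1) = 2*k + 1 + 1 + 1 + 1 := by ring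
      have e3 : 2*(k+1) = 2*k + 1 + 1 := by ring
      rw [e1, e3]
      simp only [wpow_add, wpow_one]
      simp only [List.append_assoc, ← wpow_comm]
      try simp [List.append_assoc]
end
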